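/- Let r > 1, 0 ≤ η ≤ r, and let K : ℝ → ℝ≥0 satisfy K(u) ≤ C₀ ⟨u⟩^(−r) for all u ≥ 0. Then for every continuous f : ℝ → ℝ≥0, and all t ≥ 0, ∫₀ᵗ K(t−s) f(s) ds ≤ C ⟨t⟩^(−η) · sup_{0 ≤ τ ≤ t} (⟨τ⟩^η f(τ)), where C depends only on C₀, r, η. -/

import Mathlib

/-!
Split the weight at the larger of `⟨s⟩` and `⟨t - s⟩`: since `⟨t⟩ ≤ 2 max(⟨s⟩, ⟨t - s⟩)`, for
`0 ≤ η ≤ r` one has `⟨t - s⟩^(-r) ⟨s⟩^(-η) ≤ 2^η ⟨t⟩^(-η) (⟨s⟩^(-r) + ⟨t - s⟩^(-r))`. As `r > 1`,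
`⟨·⟩^(-r)` is integrable on `ℝ`, so integrating over `[0, t]` bounds `∫₀ᵗ ⟨t - s⟩^(-r) ⟨s⟩^(-η) ds`
by `2^(η+1) ‖⟨·⟩^(-r)‖₁ ⟨t⟩^(-η)`; and `K(t - s) f(s) ≤ C₀ M ⟨t - s⟩^(-r) ⟨s⟩^(-η)`, `M` being the
weighted supremum of `f`.
-/

open MeasureTheory Real

noncomputable def jb (x : ℝ) : ℝ := Real.sqrt (1 + x ^ 2)

lemma jb_pos (x : ℝ) : 0 < jb x := Real.sqrt_pos.2 (by positivity)

lemma continuous_jb_rpow (a : ℝ) : Continuous fun x => jb x ^ a :=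
  (by unfold jb; fun_prop : Continuous jb).rpow_const fun x => Or.inl (jb_pos x).ne'

lemma jb_rpow_pos (x a : ℝ) : 0 < jb x ^ a := Real.rpow_pos_of_pos (jb_pos x) a

lemma continuous_jb_rpow_sub (t a : ℝ) : Continuous fun s => jb (t - s) ^ a :=
  (continuous_jb_rpow a).comp (continuous_const.sub continuous_id)

lemma jb_le_jb_of_abs_le {x y : ℝ} (h : |x| ≤ |y|) : jb x ≤ jb y :=
  Real.sqrt_le_sqrt (by nlinarith [sq_le_sq.2 h])

lemma jb_add_le_two_mul {a b : ℝ} (h : |b| ≤ |a|) : jb (a + b) ≤ 2 * jb a := by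
  have hab : (a + b) ^ 2 ≤ (2 * a) ^ 2 := by
    rw [sq_le_sq, abs_mul, abs_two]
    linarith [abs_add_le a b]
  calc jb (a + b) ≤ Real.sqrt (2 ^ 2 * (1 + a ^ 2)) := Real.sqrt_le_sqrt (by nlinarith)
    _ = 2 * jb a := by rw [Real.sqrt_mul (by norm_num), Real.sqrt_sq (by norm_num), jb]

lemma rpow_neg_le_two_rpow_mul_rpow_neg {x y η : ℝ} (hx : 0 < x) (hy : 0 < y) (hη : 0 ≤ η)
    (h : y ≤ 2 * x) : x ^ (-η) ≤ 2 ^ η * y ^ (-η) := by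
  calc x ^ (-η) = 2 ^ η * (2 * x) ^ (-η) := by
        rw [Real.mul_rpow (by norm_num) hx.le, ← mul_assoc, ← Real.rpow_add (by norm_num),
          add_neg_cancel, Real.rpow_zero, one_mul]
    _ ≤ 2 ^ η * y ^ (-η) :=
        mul_le_mul_of_nonneg_left (Real.rpow_le_rpow_of_nonpos hy h (neg_nonpos.2 hη))
          (by positivity)

lemma jb_rpow_neg_mul_jb_rpow_neg_le {r η : ℝ} (hη : 0 ≤ η) (hηr : η ≤ r) (s u : ℝ) :
    jb u ^ (-r) * jb s ^ (-η) ≤ 2 ^ η * jb (s + u) ^ (-η) * (jb s ^ (-r) + jb u ^ (-r)) := by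
  have hs := jb_pos s
  have hu := jb_pos u
  have hsu := jb_pos (s + u)
  have hs_r := (jb_rpow_pos s (-r)).le
  have hu_r := (jb_rpow_pos u (-r)).le
  rcases le_total |u| |s| with h | h
  · have hweight : jb s ^ (-η) ≤ 2 ^ η * jb (s + u) ^ (-η) :=
      rpow_neg_le_two_rpow_mul_rpow_neg hs hsu hη (jb_add_le_two_mul h)
    calc jb u ^ (-r) * jb s ^ (-η) ≤ jb u ^ (-r) * (2 ^ η * jb (s + u) ^ (-η)) :=
          mul_le_mul_of_nonneg_left hweight hu_r
      _ ≤ 2 ^ η * jb (s + u) ^ (-η) * (jb s ^ (-r) + jb u ^ (-r)) := by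
          rw [mul_comm]; gcongr; linarith
  · have hweight : jb u ^ (-η) ≤ 2 ^ η * jb (s + u) ^ (-η) :=
      rpow_neg_le_two_rpow_mul_rpow_neg hu hsu hη (add_comm s u ▸ jb_add_le_two_mul h)
    have hdecay : jb u ^ (η - r) ≤ jb s ^ (η - r) :=
      Real.rpow_le_rpow_of_nonpos hs (jb_le_jb_of_abs_le h) (by linarith)
    calc jb u ^ (-r) * jb s ^ (-η) = jb u ^ (-η) * (jb u ^ (η - r) * jb s ^ (-η)) := by
          rw [← mul_assoc, ← Real.rpow_add hu]; ring_nf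
      _ ≤ (2 ^ η * jb (s + u) ^ (-η)) * (jb s ^ (η - r) * jb s ^ (-η)) := by
          gcongr
      _ = 2 ^ η * jb (s + u) ^ (-η) * jb s ^ (-r) := by
          rw [← Real.rpow_add hs]; ring_nf
      _ ≤ 2 ^ η * jb (s + u) ^ (-η) * (jb s ^ (-r) + jb u ^ (-r)) := by
          gcongr; linarith

lemma integrable_jb_rpow_neg {r : ℝ} (hr : 1 < r) : Integrable fun u => jb u ^ (-r) := by
  convert integrable_rpow_neg_one_add_norm_sq (E := ℝ) (μ := volume) (r := r) (by simpa) using 2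
    with u
  rw [jb, Real.sqrt_eq_rpow, ← Real.rpow_mul (by positivity), Real.norm_eq_abs, sq_abs]
  ring_nf

lemma integral_jb_rpow_neg_pos {r : ℝ} (hr : 1 < r) : 0 < ∫ u, jb u ^ (-r) := by
  rw [integral_pos_iff_support_of_nonneg (fun u => (jb_rpow_pos u _).le)
      (integrable_jb_rpow_neg hr), Function.support_eq_univ fun u => (jb_rpow_pos u _).ne']
  simp

lemma intervalIntegral_le_integral_of_nonneg {g : ℝ → ℝ} (hg : Integrable g) (hg0 : 0 ≤ g)
    {a b : ℝ} (hab : a ≤ b) : ∫ s in a..b, g s ≤ ∫ s, g s := by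
  rw [intervalIntegral.integral_of_le hab]
  exact setIntegral_le_integral hg (ae_of_all _ hg0)

lemma integral_jb_rpow_neg_mul_jb_rpow_neg_le {r η t : ℝ} (hr : 1 < r) (hη : 0 ≤ η)
    (hηr : η ≤ r) (ht : 0 ≤ t) :
    ∫ s in (0:ℝ)..t, jb (t - s) ^ (-r) * jb s ^ (-η) ≤
      2 ^ η * jb t ^ (-η) * (2 * ∫ u, jb u ^ (-r)) := by
  set g : ℝ → ℝ := fun u => jb u ^ (-r)
  have hg : Integrable g := integrable_jb_rpow_neg hr
  have hcont := continuous_jb_rpow_sub t (-r)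
  calc ∫ s in (0:ℝ)..t, jb (t - s) ^ (-r) * jb s ^ (-η)
      ≤ ∫ s in (0:ℝ)..t, 2 ^ η * jb t ^ (-η) * (g s + g (t - s)) := by
        refine intervalIntegral.integral_mono_on ht ?_ ?_ fun s _ => ?_
        · exact (hcont.mul (continuous_jb_rpow _)).intervalIntegrable _ _
        · exact (continuous_const.mul ((continuous_jb_rpow _).add hcont)).intervalIntegrable _ _
        · simpa using jb_rpow_neg_mul_jb_rpow_neg_le hη hηr s (t - s)
    _ = 2 ^ η * jb t ^ (-η) * ∫ s in (0:ℝ)..t, (g s + g (t - s)) :=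
        intervalIntegral.integral_const_mul _ _
    _ ≤ 2 ^ η * jb t ^ (-η) * ∫ s, (g s + g (t - s)) := by
        have := jb_pos t
        gcongr
        exact intervalIntegral_le_integral_of_nonneg (hg.add (hg.comp_sub_left t))
          (fun s => (add_pos (jb_rpow_pos _ _) (jb_rpow_pos _ _)).le) ht
    _ = 2 ^ η * jb t ^ (-η) * (2 * ∫ u, jb u ^ (-r)) := by
        rw [integral_add hg (hg.comp_sub_left t), integral_sub_left_eq_self]
        ring

lemma le_sSup_image_rpow_mul_mul_rpow_neg {f : ℝ → ℝ} {S : Set ℝ} (hS : IsCompact S)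
    (hf : Continuous f) (η : ℝ) {s : ℝ} (hs : s ∈ S) :
    f s ≤ sSup ((fun τ => jb τ ^ η * f τ) '' S) * jb s ^ (-η) := by
  have hle : jb s ^ η * f s ≤ sSup ((fun τ => jb τ ^ η * f τ) '' S) :=
    le_csSup (hS.image ((continuous_jb_rpow η).mul hf)).bddAbove ⟨s, hs, rfl⟩
  rw [Real.rpow_neg (jb_pos s).le, ← div_eq_mul_inv, le_div_iff₀ (jb_rpow_pos s η)]
  linarith

theorem stmt1 (r η C₀ : ℝ) (hr : 1 < r) (hη0 : 0 ≤ η) (hηr : η ≤ r) (hC₀ : 0 < C₀)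
    (K : ℝ → ℝ) (hKnonneg : ∀ u, 0 ≤ K u)
    (hK : ∀ u : ℝ, 0 ≤ u → K u ≤ C₀ * jb u ^ (-r)) :
    ∃ C > 0, ∀ f : ℝ → ℝ, Continuous f → (∀ s, 0 ≤ f s) →
      ∀ t : ℝ, 0 ≤ t →
        ∫ s in (0:ℝ)..t, K (t - s) * f s ≤
          C * jb t ^ (-η) * sSup ((fun τ => jb τ ^ η * f τ) '' Set.Icc 0 t) := by
  have hA := integral_jb_rpow_neg_pos hr
  refine ⟨C₀ * (2 ^ η * (2 * ∫ u, jb u ^ (-r))), by positivity, fun f hf hf0 t ht => ?_⟩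
  set M := sSup ((fun τ => jb τ ^ η * f τ) '' Set.Icc 0 t)
  have hf_le (s : ℝ) (hs : s ∈ Set.Icc 0 t) : f s ≤ M * jb s ^ (-η) :=
    le_sSup_image_rpow_mul_mul_rpow_neg isCompact_Icc hf η hs
  have hM : 0 ≤ M :=
    nonneg_of_mul_nonneg_left ((hf0 0).trans (hf_le 0 ⟨le_rfl, ht⟩)) (jb_rpow_pos 0 _)
  have hpointwise : ∀ s ∈ Set.Ioc 0 t,
      K (t - s) * f s ≤ C₀ * M * (jb (t - s) ^ (-r) * jb s ^ (-η)) := fun s hs => by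
    have := jb_pos (t - s)
    calc K (t - s) * f s ≤ (C₀ * jb (t - s) ^ (-r)) * (M * jb s ^ (-η)) :=
          mul_le_mul (hK _ (by linarith [hs.2])) (hf_le s (Set.Ioc_subset_Icc_self hs)) (hf0 s)
            (by positivity)
      _ = C₀ * M * (jb (t - s) ^ (-r) * jb s ^ (-η)) := by ring
  calc ∫ s in (0:ℝ)..t, K (t - s) * f s
      ≤ ∫ s in (0:ℝ)..t, C₀ * M * (jb (t - s) ^ (-r) * jb s ^ (-η)) := by
        simp only [intervalIntegral.integral_of_le ht]
        refine integral_mono_of_nonneg (ae_of_all _ fun s => mul_nonneg (hKnonneg _) (hf0 s))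
          ?_ (ae_restrict_of_forall_mem measurableSet_Ioc hpointwise)
        exact (continuous_const.mul ((continuous_jb_rpow_sub t _).mul
          (continuous_jb_rpow _))).integrableOn_Ioc
    _ ≤ C₀ * M * (2 ^ η * jb t ^ (-η) * (2 * ∫ u, jb u ^ (-r))) := by
        rw [intervalIntegral.integral_const_mul]
        gcongr
        exact integral_jb_rpow_neg_mul_jb_rpow_neg_le hr hη0 hηr ht
    _ = C₀ * (2 ^ η * (2 * ∫ u, jb u ^ (-r))) * jb t ^ (-η) * M := by ring
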